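/- For any reals d, d' and σ > 0, the integral over all real t of |Φ((t−d')/σ) − Φ((t−d)/σ)| dt equals |d − d'|. -/

import Mathlib

/-!
For `a ≤ b`, the difference `F (t - a) - F (t - b)` of the primitive `F x = ∫_{-∞}^x f` is the
convolution of the indicator of `(a, b]` with `f`, so its integral over `t` is `(b - a) * ∫ f`.
After rescaling by `σ`, this applies to `Φ`; since `Φ` is monotone, the absolute value only
fixes the sign, and the total mass of the Gaussian density is `1`.
-/

open MeasureTheory Real Filter

noncomputable def phi (t : ℝ) : ℝ := Real.exp (-t^2/2) / Real.sqrt (2*Real.pi)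

noncomputable def Phi (x : ℝ) : ℝ := ∫ s in Set.Iic x, phi s

open ProbabilityTheory Set
open scoped Convolution

lemma phi_eq_gaussianPDFReal : phi = gaussianPDFReal 0 1 := by
  ext t
  simp [phi, gaussianPDFReal, div_eq_inv_mul]

lemma integrable_phi : Integrable phi :=
  phi_eq_gaussianPDFReal ▸ integrable_gaussianPDFReal 0 1

lemma integral_phi : ∫ t, phi t = 1 :=
  phi_eq_gaussianPDFReal ▸ integral_gaussianPDFReal_eq_one 0 one_ne_zero

lemma monotone_Phi : Monotone Phi := fun _ _ hab =>
  setIntegral_mono_set integrable_phi.integrableOn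
    (ae_of_all _ fun t => by unfold phi; positivity) (Iic_subset_Iic.2 hab).eventuallyLE

section

variable {f : ℝ → ℝ} {a b : ℝ}

lemma setIntegral_Iic_sub_setIntegral_Iic_eq_convolution (hf : Integrable f) (hab : a ≤ b)
    (t : ℝ) :
    (∫ s in Iic (t - a), f s) - ∫ s in Iic (t - b), f s
      = ((Ioc a b).indicator 1 ⋆[ContinuousLinearMap.lsmul ℝ ℝ] f) t := by
  rw [intervalIntegral.integral_Iic_sub_Iic hf.integrableOn hf.integrableOn,
    ← intervalIntegral.integral_comp_sub_left, intervalIntegral.integral_of_le hab,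
    convolution_def, ← integral_indicator measurableSet_Ioc]
  congr with u
  by_cases hu : u ∈ Ioc a b <;> simp [hu]

theorem integral_setIntegral_Iic_sub_setIntegral_Iic (hf : Integrable f) (hab : a ≤ b) :
    ∫ t, ((∫ s in Iic (t - a), f s) - ∫ s in Iic (t - b), f s) = (b - a) * ∫ s, f s := by
  simp_rw [setIntegral_Iic_sub_setIntegral_Iic_eq_convolution hf hab]
  rw [integral_convolution _ ((integrable_indicator_iff measurableSet_Ioc).2
    (integrableOn_const measure_Ioc_lt_top.ne)) hf]
  simp only [integral_indicator_one measurableSet_Ioc, measureReal_def, Real.volume_Ioc,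
    ENNReal.toReal_ofReal (sub_nonneg.2 hab), ContinuousLinearMap.lsmul_apply, smul_eq_mul]

end

lemma integral_Phi_sub_Phi {d d' σ : ℝ} (hσ : 0 < σ) (h : d' ≤ d) :
    ∫ t, (Phi ((t - d') / σ) - Phi ((t - d) / σ)) = d - d' := by
  simp_rw [sub_div _ _ σ]
  rw [Measure.integral_comp_div (fun u => Phi (u - d' / σ) - Phi (u - d / σ)), smul_eq_mul]
  unfold Phi
  rw [integral_setIntegral_Iic_sub_setIntegral_Iic integrable_phi (by gcongr), integral_phi,
    abs_of_pos hσ]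
  field_simp

theorem stmt6 (d d' σ : ℝ) (hσ : 0 < σ) :
    ∫ t : ℝ, |Phi ((t - d') / σ) - Phi ((t - d) / σ)| = |d - d'| := by
  wlog h : d' ≤ d generalizing d d'
  · simp_rw [abs_sub_comm d, ← this d' d (le_of_not_ge h), abs_sub_comm]
  have hnonneg (t : ℝ) : 0 ≤ Phi ((t - d') / σ) - Phi ((t - d) / σ) :=
    sub_nonneg.2 (monotone_Phi (by gcongr))
  simp_rw [abs_of_nonneg (hnonneg _), abs_of_nonneg (sub_nonneg.2 h)]
  exact integral_Phi_sub_Phi hσ h
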